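/- arXiv:1602.07583 — 2 statements merged into one kernel-verified Lean document; each statement's English description precedes it below -/
import Mathlib

section
/- Let V be a discriminator variety of finite similarity type (finitely many operation symbols, each of finite arity) that is generated by its finite members as a variety (i.e., every equation valid in all finite members of V is valid in all members of V). Let F be a V-free algebra freely generated by a finite set X, and let ≤ be an equationally definable binary relation on F (i.e., there are terms τ(x,y) and σ'(x,y) in the language of V such that for all a,b ∈ F, a ≤ b iff τ^F(a,b) = σ'^F(a,b)) which is a pre-order (reflexive and transitive). Then ≤ is atomic: writing a < b for (a ≤ b and not b ≤ a), for every a < b in F there exists c ∈ F with a < c ≤ b such that no x ∈ F satisfies a < x < c. -/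
/-!
Since `V` is generated by its finite members, `F` is a subdirect product of its finite subdirectly
irreducible quotients `Q`, so `u ≤ w` holds iff `τ = σ'` holds at `(Q u, Q w)` for every such `Q`.
Given `a < b`, fix `Q₀` at which `b ≤ a` fails. As `Q₀`, `X` and the similarity type are finite,
finitely many equations of `F`, true in `Q₀`, force every `Q` satisfying them to factor through
`Q₀`; nesting the switching term over them gives `C x ∈ F` equal to `x` in those `Q` and to `a` in
the others. For `x` with `a ≤ x ≤ b` at which `x ≤ a` fails in `Q₀`, this gives `a < C x ≤ x`. If
`C x` were not an atom above `a`, any `a < y < C x` would again be such an element, with `y ≤ x`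
and `x ≤ y` failing in `Q₀`. Starting from `b`, this descent would strictly shrink the finite set
`Q₀ '' {z | z ≤ x}` forever.
-/

open FirstOrder FirstOrder.Language FirstOrder.Language.Structure

/-- `M` satisfies the set of equations `E` (each equation being a pair of
terms in countably many variables). The variety `V` axiomatized by `E` is the
class of all structures satisfying `ModelsEqs L E`. -/
def ModelsEqs (L : Language) (E : Set (L.Term ℕ × L.Term ℕ))
    (M : Type*) [L.Structure M] : Prop :=
  ∀ e ∈ E, ∀ v : ℕ → M, e.1.realize v = e.2.realize v

/-- A congruence of an `L`-structure: an equivalence relation compatible with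
all the operations. -/
def IsCongruence (L : Language) (M : Type*) [L.Structure M]
    (c : M → M → Prop) : Prop :=
  Equivalence c ∧ ∀ (n : ℕ) (f : L.Functions n) (a b : Fin n → M),
    (∀ i, c (a i) (b i)) → c (funMap f a) (funMap f b)

/-- A structure is subdirectly irreducible if among its congruences distinct
from the identity relation there is a least one. -/
def SubdirectlyIrreducible (L : Language) (M : Type*) [L.Structure M] : Prop :=
  ∃ c : M → M → Prop, IsCongruence L M c ∧ c ≠ Eq ∧
    ∀ d : M → M → Prop, IsCongruence L M d → d ≠ Eq → ∀ x y, c x y → d x y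

universe u

section Homs

variable {L : Language} {M N : Type*} [L.Structure M] [L.Structure N]

theorem FirstOrder.Language.Hom.realize_pair (g : M →[L] N) (t : L.Term (Fin 2)) (u w : M) :
    t.realize ![g u, g w] = g (t.realize ![u, w]) := by
  rw [← HomClass.realize_term]
  congr 1
  ext i
  fin_cases i <;> rfl

theorem FirstOrder.Language.Hom.realize_quad (g : M →[L] N) (t : L.Term (Fin 4)) (p q r s : M) :
    t.realize ![g p, g q, g r, g s] = g (t.realize ![p, q, r, s]) := by
  rw [← HomClass.realize_term]
  congr 1
  ext i
  fin_cases i <;> rfl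

def EqnRel (τ σ' : L.Term (Fin 2)) (u w : M) : Prop :=
  τ.realize ![u, w] = σ'.realize ![u, w]

theorem eqnRel_hom_iff {τ σ' : L.Term (Fin 2)} (g : M →[L] N) (u w : M) :
    EqnRel τ σ' (g u) (g w) ↔ g (τ.realize ![u, w]) = g (σ'.realize ![u, w]) := by
  rw [EqnRel, Hom.realize_pair, Hom.realize_pair]

theorem EqnRel.of_ker_le {F : Type*} [L.Structure F] {τ σ' : L.Term (Fin 2)}
    {g : F →[L] M} {g' : F →[L] N} (hker : ∀ z z', g z = g z' → g' z = g' z') {u w : F}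
    (h : EqnRel τ σ' (g u) (g w)) : EqnRel τ σ' (g' u) (g' w) :=
  (eqnRel_hom_iff g' u w).2 (hker _ _ ((eqnRel_hom_iff g u w).1 h))

theorem ModelsEqs.of_injective {E : Set (L.Term ℕ × L.Term ℕ)} (hN : ModelsEqs L E N)
    (g : M →[L] N) (hg : Function.Injective g) : ModelsEqs L E M := fun e he v =>
  hg (by rw [← HomClass.realize_term, ← HomClass.realize_term, hN e he])

theorem ModelsEqs.of_surjective {E : Set (L.Term ℕ × L.Term ℕ)} (hM : ModelsEqs L E M)
    (g : M →[L] N) (hg : Function.Surjective g) : ModelsEqs L E N := by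
  intro e he v
  obtain ⟨v', rfl⟩ : ∃ v', g ∘ v' = v := ⟨Function.surjInv hg ∘ v,
    funext fun n => Function.surjInv_eq hg (v n)⟩
  rw [HomClass.realize_term, HomClass.realize_term, hM e he]

end Homs

section Congruences

variable {L : Language}

theorem IsCongruence.exists_quotient [L.IsAlgebraic] {M : Type u} [L.Structure M]
    {c : M → M → Prop} (hc : IsCongruence L M c) :
    ∃ (Q : Type u) (_ : L.Structure Q) (π : M →[L] Q),
      Function.Surjective π ∧ ∀ x y, π x = π y ↔ c x y := by
  let s : Setoid M := ⟨c, hc.1⟩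
  let _ : L.Prestructure s :=
    { toStructure := inferInstance
      fun_equiv := fun x y hxy => hc.2 _ _ x y hxy
      rel_equiv := fun {_} r => isEmptyElim r }
  refine ⟨Quotient s, inferInstance,
    { toFun := Quotient.mk s
      map_fun' := fun φ x => (funMap_quotient_mk' s φ x).symm
      map_rel' := fun {_} r => isEmptyElim r },
    Quotient.mk_surjective, fun x y => Quotient.eq⟩

theorem subdirectlyIrreducible_of_forall_congruence {M : Type*} [L.Structure M] {x y : M}
    (hxy : x ≠ y) (h : ∀ d, IsCongruence L M d → d ≠ Eq → d x y) :
    SubdirectlyIrreducible L M := by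
  refine ⟨fun u v => ∀ d, IsCongruence L M d → d x y → d u v, ⟨⟨?_, ?_, ?_⟩, ?_⟩, ?_, ?_⟩
  · exact fun u d hd _ => hd.1.refl u
  · exact fun huv d hd hdxy => hd.1.symm (huv d hd hdxy)
  · exact fun huv hvw d hd hdxy => hd.1.trans (huv d hd hdxy) (hvw d hd hdxy)
  · exact fun n φ a b hab d hd hdxy => hd.2 n φ a b fun i => hab i d hd hdxy
  · exact fun hEq => hxy (cast (congrFun₂ hEq x y) fun _ _ hd => hd)
  · exact fun d hd hdEq u v huv => huv d hd (h d hd hdEq)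

end Congruences

structure FiniteSIQuotient (L : Language) (E : Set (L.Term ℕ × L.Term ℕ)) (F : Type u)
    [L.Structure F] where
  carrier : Type u
  [str : L.Structure carrier]
  [finite : Finite carrier]
  models : ModelsEqs L E carrier
  si : SubdirectlyIrreducible L carrier
  toHom : F →[L] carrier
  surjective : Function.Surjective toHom

attribute [instance] FiniteSIQuotient.str FiniteSIQuotient.finite

namespace FiniteSIQuotient

variable {L : Language} {E : Set (L.Term ℕ × L.Term ℕ)} {F : Type u} [L.Structure F]

instance : CoeFun (FiniteSIQuotient L E F) (fun Q => F → Q.carrier) := ⟨fun Q => Q.toHom⟩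

theorem exists_apply_ne_of_surjective [L.IsAlgebraic] {A : Type u} [L.Structure A] [Finite A]
    (hA : ModelsEqs L E A) (g : F →[L] A) (hg : Function.Surjective g) {p q : F}
    (hpq : g p ≠ g q) : ∃ Q : FiniteSIQuotient L E F, Q p ≠ Q q := by
  induction hn : Nat.card A using Nat.strong_induction_on generalizing A with
  | _ n ih =>
  by_cases hsi : ∀ d, IsCongruence L A d → d ≠ Eq → d (g p) (g q)
  · exact ⟨⟨A, hA, subdirectlyIrreducible_of_forall_congruence hpq hsi, g, hg⟩, hpq⟩
  push Not at hsi
  obtain ⟨d, hd, hdEq, hdpq⟩ := hsi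
  obtain ⟨B, _, π, hπ, hπd⟩ := hd.exists_quotient
  have : Finite B := Finite.of_surjective π hπ
  have hπinj : ¬ Function.Injective π := fun hinj => hdEq <| funext₂ fun x y =>
    propext ⟨fun h => hinj ((hπd x y).2 h), fun h => h ▸ hd.1.refl x⟩
  have hcard : Nat.card B < n := hn ▸ (Nat.card_le_card_of_surjective π hπ).lt_of_ne
    fun h => hπinj (hπ.bijective_of_nat_card_le h.ge).1
  exact ih _ hcard (hA.of_surjective π hπ) (π.comp g) (hπ.comp hg)
    (by simpa [hπd] using hdpq) rfl

end FiniteSIQuotient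

def GeneratedByFiniteModels (L : Language) (E : Set (L.Term ℕ × L.Term ℕ)) : Prop :=
  ∀ t s : L.Term ℕ,
    (∀ (M : Type u) [L.Structure M], Finite M → ModelsEqs L E M →
      ∀ v : ℕ → M, t.realize v = s.realize v) →
    (∀ (M : Type u) [L.Structure M], ModelsEqs L E M →
      ∀ v : ℕ → M, t.realize v = s.realize v)

def IsFreeOver {L : Language} (E : Set (L.Term ℕ × L.Term ℕ)) {F : Type u} [L.Structure F]
    {X : Type*} (ι : X → F) : Prop :=
  ∀ (A : Type u) [L.Structure A], ModelsEqs L E A →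
    ∀ f : X → A, ∃! g : F →[L] A, ∀ x : X, g (ι x) = f x

namespace IsFreeOver

variable {L : Language} {E : Set (L.Term ℕ × L.Term ℕ)} {F : Type u} [L.Structure F]
  {X : Type*} {ι : X → F}

theorem hom_ext (hfree : IsFreeOver E ι) {A : Type u} [L.Structure A] (hA : ModelsEqs L E A)
    {g g' : F →[L] A} (h : ∀ x, g (ι x) = g' (ι x)) : g = g' :=
  (hfree A hA (g' ∘ ι)).unique h fun _ => rfl

theorem exists_term_realize_eq (hfree : IsFreeOver E ι) (hF : ModelsEqs L E F) (u : F) :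
    ∃ t : L.Term X, t.realize ι = u := by
  let S := Substructure.closure L (Set.range ι)
  obtain ⟨g, hg, -⟩ := hfree S (hF.of_injective S.subtype.toHom Subtype.val_injective)
    fun x => ⟨ι x, Substructure.subset_closure ⟨x, rfl⟩⟩
  have hid : S.subtype.toHom.comp g = Hom.id L F :=
    hfree.hom_ext hF fun x => congrArg Subtype.val (hg x)
  have hu : u ∈ S := by
    convert (g u).2
    exact (congrArg (fun k : F →[L] F => k u) hid).symm
  obtain ⟨t, rfl⟩ := Substructure.mem_closure_iff_exists_term.1 hu
  refine ⟨t.relabel (Set.rangeSplitting ι), ?_⟩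
  rw [Term.realize_relabel]
  exact congrArg t.realize (funext (Set.apply_rangeSplitting ι))

theorem exists_finite_hom_apply_ne [Finite X] (hfree : IsFreeOver E ι) (hF : ModelsEqs L E F)
    (hgenfin : GeneratedByFiniteModels.{u} L E) {p q : F} (hpq : p ≠ q) :
    ∃ (A : Type u) (_ : L.Structure A), Finite A ∧ ModelsEqs L E A ∧
      ∃ g : F →[L] A, g p ≠ g q := by
  obtain ⟨t, rfl⟩ := hfree.exists_term_realize_eq hF p
  obtain ⟨s, rfl⟩ := hfree.exists_term_realize_eq hF q
  obtain ⟨enc, henc⟩ := Countable.exists_injective_nat X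
  have hext : Function.extend enc ι (fun _ => t.realize ι) ∘ enc = ι :=
    funext (henc.extend_apply ι _)
  obtain ⟨A, _, hAfin, hA, v, hv⟩ : ∃ (A : Type u) (_ : L.Structure A), Finite A ∧
      ModelsEqs L E A ∧ ∃ v : ℕ → A, (t.relabel enc).realize v ≠ (s.relabel enc).realize v := by
    by_contra! h
    refine hpq ?_
    simpa [Term.realize_relabel, hext] using hgenfin _ _ (fun A _ hAfin hA v => h A _ hAfin hA v)
      F hF (Function.extend enc ι fun _ => t.realize ι)
  obtain ⟨g, hg, -⟩ := hfree A hA (v ∘ enc)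
  refine ⟨A, _, hAfin, hA, g, ?_⟩
  rwa [← HomClass.realize_term, ← HomClass.realize_term, show ⇑g ∘ ι = v ∘ enc from funext hg,
    ← Term.realize_relabel, ← Term.realize_relabel]

theorem eq_iff_forall_finiteSIQuotient [L.IsAlgebraic] [Finite X] (hfree : IsFreeOver E ι)
    (hF : ModelsEqs L E F) (hgenfin : GeneratedByFiniteModels.{u} L E) {p q : F} :
    p = q ↔ ∀ Q : FiniteSIQuotient L E F, Q p = Q q := by
  refine ⟨fun h Q => h ▸ rfl, fun h => by_contra fun hpq => ?_⟩
  obtain ⟨A, _, _, hA, g, hg⟩ := hfree.exists_finite_hom_apply_ne hF hgenfin hpq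
  let g' : F →[L] g.range := g.codRestrict g.range g.mem_range_self
  have hg' : Function.Surjective g' := by
    rintro ⟨_, y, rfl⟩
    exact ⟨y, rfl⟩
  obtain ⟨Q, hQ⟩ := FiniteSIQuotient.exists_apply_ne_of_surjective
    (hA.of_injective g.range.subtype.toHom Subtype.val_injective) g' hg'
    (p := p) (q := q) fun h => hg (congrArg Subtype.val h)
  exact hQ (h Q)

end IsFreeOver

theorem FirstOrder.Language.finite_sigma_functions {L : Language}
    (hfin : ∀ n, Finite (L.Functions n)) (hbound : ∃ N : ℕ, ∀ n, N ≤ n → IsEmpty (L.Functions n)) :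
    Finite (Σ n, L.Functions n) := by
  obtain ⟨N, hN⟩ := hbound
  refine Finite.of_surjective (fun φ : Σ i : Fin N, L.Functions i => ⟨φ.1, φ.2⟩) ?_
  rintro ⟨n, φ⟩
  exact ⟨⟨⟨n, lt_of_not_ge fun h => (hN n h).false φ⟩, φ⟩, rfl⟩

/-- The equations are the operation tables of `M` and the images of the generators, pulled back
along a section of `h`. -/
theorem IsFreeOver.exists_diagram {L : Language} [L.IsAlgebraic] [Finite (Σ n, L.Functions n)]
    {E : Set (L.Term ℕ × L.Term ℕ)} {F : Type u} [L.Structure F] {X : Type*} [Finite X]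
    {ι : X → F} (hfree : IsFreeOver E ι) {M : Type u} [L.Structure M] [Finite M]
    (h : F →[L] M) (hh : Function.Surjective h) :
    ∃ D : List (F × F), (∀ c ∈ D, h c.1 = h c.2) ∧
      ∀ (N : Type u) [L.Structure N], ModelsEqs L E N → ∀ g : F →[L] N,
        (∀ c ∈ D, g c.1 = g c.2) → ∀ z z', h z = h z' → g z = g z' := by
  classical
  let f := Function.surjInv hh
  let opEqs : (Σ φ : Σ n, L.Functions n, Fin φ.1 → M) → F × F :=
    fun φm => (f (funMap φm.1.2 φm.2), funMap φm.1.2 (f ∘ φm.2))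
  let genEqs : X → F × F := fun x => (f (h (ι x)), ι x)
  have hfin : (Set.range opEqs ∪ Set.range genEqs).Finite :=
    (Set.finite_range _).union (Set.finite_range _)
  refine ⟨hfin.toFinset.toList, ?_, ?_⟩
  · simp only [Finset.mem_toList, Set.Finite.mem_toFinset]
    rintro _ (⟨⟨⟨n, φ⟩, m⟩, rfl⟩ | ⟨x, rfl⟩)
    · simp only [opEqs, f, Function.surjInv_eq hh, HomClass.map_fun]
      exact congrArg (funMap φ) (funext fun i => (Function.surjInv_eq hh (m i)).symm)
    · exact Function.surjInv_eq hh _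
  · intro N _ hN g hg z z' hzz
    simp only [Finset.mem_toList, Set.Finite.mem_toFinset] at hg
    let e : M →[L] N :=
      { toFun := g ∘ f
        map_fun' := fun φ m => (hg _ (Or.inl ⟨⟨⟨_, φ⟩, m⟩, rfl⟩)).trans (g.map_fun φ (f ∘ m))
        map_rel' := fun {_} r => isEmptyElim r }
    have hge : g = e.comp h := hfree.hom_ext hN fun x => (hg _ (Or.inr ⟨x, rfl⟩)).symm
    rw [hge, Hom.comp_apply, Hom.comp_apply, hzz]

def IsDiscriminatorTerm {L : Language} (σ : L.Term (Fin 4)) (M : Type*) [L.Structure M] : Prop :=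
  ∀ x y a b : M, (x = y → σ.realize ![x, y, a, b] = a) ∧ (x ≠ y → σ.realize ![x, y, a, b] = b)

theorem IsDiscriminatorTerm.realize_eq {L : Language} {σ : L.Term (Fin 4)} {M : Type*}
    [L.Structure M] (hσ : IsDiscriminatorTerm σ M) [DecidableEq M] (x y a b : M) :
    σ.realize ![x, y, a, b] = if x = y then a else b := by
  split_ifs with h
  exacts [(hσ x y a b).1 h, (hσ x y a b).2 h]

def switchChain {L : Language} {F : Type*} [L.Structure F] (σ : L.Term (Fin 4))
    (D : List (F × F)) (u v : F) : F :=
  D.foldr (fun c w => σ.realize ![c.1, c.2, w, v]) u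

theorem FirstOrder.Language.Hom.apply_switchChain {L : Language} {F N : Type*} [L.Structure F]
    [L.Structure N] [DecidableEq N] {σ : L.Term (Fin 4)} (hσ : IsDiscriminatorTerm σ N)
    (g : F →[L] N) (D : List (F × F)) (u v : F) :
    g (switchChain σ D u v) = if ∀ c ∈ D, g c.1 = g c.2 then g u else g v := by
  induction D with
  | nil => simp [switchChain]
  | cons c D ih =>
    rw [switchChain, List.foldr_cons, ← switchChain, ← Hom.realize_quad, hσ.realize_eq, ih]
    by_cases hc : g c.1 = g c.2
    · simp only [hc, List.forall_mem_cons, true_and, if_true]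
    · simp only [hc, List.forall_mem_cons, false_and, if_false]

/-- A step that moves `le`-down while leaving the `r`-cone of `h x` strictly shrinks the finite
set `h '' {z | le z x}`, so it cannot be repeated forever. -/
theorem not_of_forall_exists_descent {α β : Type*} [Finite β] {le : α → α → Prop}
    (hrefl : ∀ x, le x x) (htrans : ∀ ⦃x y z⦄, le x y → le y z → le x z)
    {r : β → β → Prop} {h : α → β}
    (hmono : ∀ ⦃u w⦄, le u w → r (h u) (h w)) {P : α → Prop}
    (hstep : ∀ x, P x → ∃ y, P y ∧ le y x ∧ ¬ r (h x) (h y)) (x : α) : ¬ P x := by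
  suffices ∀ s : Set β, ∀ x, h '' {z | le z x} = s → ¬ P x from this _ x rfl
  intro s
  induction s using WellFoundedLT.induction with
  | _ s ih =>
  rintro x rfl hx
  obtain ⟨y, hy, hyx, hxy⟩ := hstep x hx
  refine ih _ ((Set.ssubset_iff_of_subset ?_).2 ⟨h x, ⟨x, hrefl x, rfl⟩, ?_⟩) y rfl hy
  · rintro _ ⟨z, hzy, rfl⟩
    exact ⟨z, htrans hzy hyx, rfl⟩
  · rintro ⟨z, hzy, hzx⟩
    exact hxy (hzx ▸ hmono hzy)

section Atomicity

variable {L : Language} {E : Set (L.Term ℕ × L.Term ℕ)} {F : Type u} [L.Structure F]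
  {le : F → F → Prop} {τ σ' : L.Term (Fin 2)} {σ : L.Term (Fin 4)}

theorem le_switchChain
    (hle : ∀ u w, le u w ↔ ∀ Q : FiniteSIQuotient L E F, EqnRel τ σ' (Q u) (Q w))
    (hrefl : ∀ x, le x x) (hσ : ∀ Q : FiniteSIQuotient L E F, IsDiscriminatorTerm σ Q.carrier)
    (D : List (F × F)) {a x : F} (hax : le a x) :
    le a (switchChain σ D x a) ∧ le (switchChain σ D x a) x := by
  classical
  have hrefl' : ∀ z (Q : FiniteSIQuotient L E F), EqnRel τ σ' (Q z) (Q z) :=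
    fun z => (hle z z).1 (hrefl z)
  rw [hle] at hax
  simp only [hle, ← forall_and]
  intro Q
  rw [Hom.apply_switchChain (hσ Q)]
  split_ifs
  exacts [⟨hax Q, hrefl' x Q⟩, ⟨hrefl' a Q, hax Q⟩]

theorem exists_atom_of_diagram
    (hle : ∀ u w, le u w ↔ ∀ Q : FiniteSIQuotient L E F, EqnRel τ σ' (Q u) (Q w))
    (hrefl : ∀ x, le x x) (htrans : ∀ ⦃x y z⦄, le x y → le y z → le x z)
    (hσ : ∀ Q : FiniteSIQuotient L E F, IsDiscriminatorTerm σ Q.carrier)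
    {a b : F} (hab : le a b) (Q₀ : FiniteSIQuotient L E F) (hQ₀ : ¬ EqnRel τ σ' (Q₀ b) (Q₀ a))
    {D : List (F × F)} (hD₀ : ∀ c ∈ D, Q₀ c.1 = Q₀ c.2)
    (hD : ∀ Q : FiniteSIQuotient L E F, (∀ c ∈ D, Q c.1 = Q c.2) →
      ∀ z z', Q₀ z = Q₀ z' → Q z = Q z') :
    ∃ c : F, (le a c ∧ ¬ le c a) ∧ le c b ∧
      ¬ ∃ x : F, (le a x ∧ ¬ le x a) ∧ (le x c ∧ ¬ le c x) := by
  classical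
  let C x := switchChain σ D x a
  have hQ₀C : ∀ x, Q₀ (C x) = Q₀ x := fun x => by
    rw [Hom.apply_switchChain (hσ Q₀), if_pos hD₀]
  -- a `Q` in which `C x` differs from `a` satisfies `D`, hence factors through `Q₀`
  have hfactor : ∀ (Q : FiniteSIQuotient L E F) x, Q (C x) ≠ Q a →
      Q (C x) = Q x ∧ ∀ z z', Q₀ z = Q₀ z' → Q z = Q z' := fun Q x hne => by
    simp only [C, Hom.apply_switchChain (hσ Q)] at hne ⊢
    split_ifs at hne ⊢ with hsat
    exacts [⟨rfl, hD Q hsat⟩, absurd rfl hne]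
  have hwitness : ∀ {u w}, ¬ le u w → ∃ Q : FiniteSIQuotient L E F, ¬ EqnRel τ σ' (Q u) (Q w) :=
    fun h => by simpa [hle] using h
  by_contra! hno
  refine not_of_forall_exists_descent hrefl htrans (h := Q₀) (fun u w huw => (hle u w).1 huw Q₀)
    (P := fun x => le a x ∧ le x b ∧ ¬ EqnRel τ σ' (Q₀ x) (Q₀ a)) ?_ b ⟨hab, hrefl b, hQ₀⟩
  rintro x ⟨hax, hxb, hxa⟩
  obtain ⟨haCx, hCxx⟩ := le_switchChain hle hrefl hσ D hax
  have hCxa : ¬ le (C x) a := fun h => hxa (hQ₀C x ▸ (hle _ _).1 h Q₀)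
  obtain ⟨y, ⟨hay, hya⟩, hyCx, hCxy⟩ := hno (C x) ⟨haCx, hCxa⟩ (htrans hCxx hxb)
  obtain ⟨Q₁, hQ₁⟩ := hwitness hya
  obtain ⟨Q₂, hQ₂⟩ := hwitness hCxy
  obtain ⟨-, hker₁⟩ := hfactor Q₁ x fun h => hQ₁ (h ▸ (hle _ _).1 hyCx Q₁)
  obtain ⟨hQ₂C, hker₂⟩ := hfactor Q₂ x fun h => hQ₂ (h ▸ (hle _ _).1 hay Q₂)
  refine ⟨y, ⟨hay, htrans hyCx (htrans hCxx hxb), fun h => hQ₁ (h.of_ker_le hker₁)⟩,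
    htrans hyCx hCxx, fun h => hQ₂ ?_⟩
  rw [hQ₂C]
  exact h.of_ker_le hker₂

end Atomicity

/-- In a finitely generated free algebra of a discriminator variety of finite
similarity type that is generated by its finite members, every equationally
definable pre-order is atomic. -/
theorem free_algebra_definable_preorder_atomic
    {L : Language} (E : Set (L.Term ℕ × L.Term ℕ))
    -- finite similarity type: no relation symbols, finitely many operation
    -- symbols, each of finite arity
    (hnorel : ∀ n, IsEmpty (L.Relations n))
    (hfinfun : ∀ n, Finite (L.Functions n))
    (hfinarity : ∃ N : ℕ, ∀ n, N ≤ n → IsEmpty (L.Functions n))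
    -- discriminator variety: there is a switching term for the subdirectly
    -- irreducible members of the variety
    (hdisc : ∃ σ : L.Term (Fin 4),
      ∀ (M : Type u) [L.Structure M], ModelsEqs L E M →
        SubdirectlyIrreducible L M → ∀ x y a b : M,
          (x = y → σ.realize ![x, y, a, b] = a) ∧
          (x ≠ y → σ.realize ![x, y, a, b] = b))
    -- the variety is generated by its finite members: every equation valid in
    -- all finite members is valid in all members
    (hgenfin : ∀ t s : L.Term ℕ,
      (∀ (M : Type u) [L.Structure M], Finite M → ModelsEqs L E M →
        ∀ v : ℕ → M, t.realize v = s.realize v) →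
      (∀ (M : Type u) [L.Structure M], ModelsEqs L E M →
        ∀ v : ℕ → M, t.realize v = s.realize v))
    -- `F` is the `V`-free algebra freely generated by the finite set `X`
    {F : Type u} [L.Structure F] (hF : ModelsEqs L E F)
    {X : Type*} [Finite X] (ι : X → F)
    (hfree : ∀ (A : Type u) [L.Structure A], ModelsEqs L E A →
      ∀ f : X → A, ∃! g : F →[L] A, ∀ x : X, g (ι x) = f x)
    -- `le` is an equationally definable binary relation on `F`
    (le : F → F → Prop) (τ σ' : L.Term (Fin 2))
    (hdef : ∀ a b : F, le a b ↔ τ.realize ![a, b] = σ'.realize ![a, b])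
    -- which is a pre-order
    (hrefl : Reflexive le) (htrans : Transitive le) :
    -- conclusion: `le` is atomic
    ∀ a b : F, (le a b ∧ ¬ le b a) →
      ∃ c : F, (le a c ∧ ¬ le c a) ∧ le c b ∧
        ¬ ∃ x : F, (le a x ∧ ¬ le x a) ∧ (le x c ∧ ¬ le c x) := by
  have : L.IsAlgebraic := hnorel
  have := finite_sigma_functions hfinfun hfinarity
  obtain ⟨σ, hσ⟩ := hdisc
  have hle : ∀ u w, le u w ↔ ∀ Q : FiniteSIQuotient L E F, EqnRel τ σ' (Q u) (Q w) := by
    intro u w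
    simp only [hdef, eqnRel_hom_iff]
    exact IsFreeOver.eq_iff_forall_finiteSIQuotient hfree hF hgenfin
  rintro a b ⟨hab, hba⟩
  obtain ⟨Q₀, hQ₀⟩ : ∃ Q : FiniteSIQuotient L E F, ¬ EqnRel τ σ' (Q b) (Q a) := by
    simpa [hle] using hba
  obtain ⟨D, hD₀, hD⟩ := IsFreeOver.exists_diagram hfree Q₀.toHom Q₀.surjective
  exact exists_atom_of_diagram hle hrefl htrans (fun Q => hσ _ Q.models Q.si) hab Q₀ hQ₀ hD₀
    fun Q => hD _ Q.models Q.toHom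
end

section
/- Let X be an infinite type, let B be a Boolean algebra, and let ι : X → B be a map such that B is the free Boolean algebra on X via ι: for every Boolean algebra C and every map f : X → C there exists a unique Boolean algebra homomorphism g : B → C (a map preserving ∧, ∨, ¬, 0, 1) with g ∘ ι = f. Then B is atomless: no element of B is an atom, i.e., for every b ∈ B with b ≠ 0 there exists x ∈ B with 0 < x < b. -/
/-!
An atom `a` of `B` yields the two-valued homomorphism `[a ≤ ·]`, and it is the only
homomorphism into a nontrivial algebra sending `a` to `⊤`. Enumerate distinct generators
`x₀, x₁, …` and let `hₙ` be `[a ≤ ·]` with its value at `xₙ` flipped. By freeness the `hₙ`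
assemble into one homomorphism `G : B → 𝒫(ℕ)`, `n ∈ G c ↔ hₙ c`. Along a nonprincipal
ultrafilter the `hₙ` converge to `[a ≤ ·]` on generators, so by freeness on all of `B`; hence
`hₙ a` holds for some `n`, which forces `hₙ = [a ≤ ·]`, contradicting the flip at `xₙ`.
-/

/-- A map between Boolean algebras is a Boolean algebra homomorphism if it
preserves `⊓`, `⊔`, complement, `⊥` and `⊤`. -/
def IsBooleanHom {B C : Type*} [BooleanAlgebra B] [BooleanAlgebra C] (g : B → C) : Prop :=
  (∀ a b : B, g (a ⊓ b) = g a ⊓ g b) ∧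
  (∀ a b : B, g (a ⊔ b) = g a ⊔ g b) ∧
  (∀ a : B, g aᶜ = (g a)ᶜ) ∧
  g ⊥ = ⊥ ∧ g ⊤ = ⊤

section TwoValued

variable {α β B C : Type*}

open Classical in
noncomputable def twoValued [Top C] [Bot C] (P : α → Prop) : α → C :=
  fun c => if P c then ⊤ else ⊥

theorem twoValued_inj [BooleanAlgebra C] [Nontrivial C] {P : α → Prop} {Q : β → Prop}
    {a : α} {b : β} :
    (twoValued P a : C) = twoValued Q b ↔ (P a ↔ Q b) := by
  by_cases hP : P a <;> by_cases hQ : Q b <;> simp [twoValued, hP, hQ]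

variable [BooleanAlgebra B] [BooleanAlgebra C]

theorem isBooleanHom_twoValued {P : B → Prop} (hinf : ∀ a b, P (a ⊓ b) ↔ P a ∧ P b)
    (hcompl : ∀ a, P aᶜ ↔ ¬ P a) : IsBooleanHom (twoValued P : B → C) := by
  have hbot : ¬ P ⊥ := by
    have := hinf ⊥ ⊥ᶜ
    rw [inf_compl_eq_bot, hcompl] at this
    tauto
  have htop : P ⊤ := by simpa [hbot] using hcompl ⊥
  have hsup : ∀ a b, P (a ⊔ b) ↔ P a ∨ P b := fun a b => by
    rw [← compl_compl (a ⊔ b), hcompl, compl_sup, hinf, hcompl, hcompl]; tauto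
  refine ⟨fun a b => ?_, fun a b => ?_, fun a => ?_, by simp [twoValued, hbot],
    by simp [twoValued, htop]⟩
  · by_cases ha : P a <;> by_cases hb : P b <;> simp [twoValued, hinf, ha, hb]
  · by_cases ha : P a <;> by_cases hb : P b <;> simp [twoValued, hsup, ha, hb]
  · by_cases ha : P a <;> simp [twoValued, hcompl, ha]

theorem Ultrafilter.isBooleanHom_twoValued_mem (U : Ultrafilter α) :
    IsBooleanHom (twoValued (· ∈ U) : Set α → C) :=
  isBooleanHom_twoValued (fun _ _ => Filter.inter_mem_iff) (fun _ => U.compl_mem_iff_notMem)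

theorem IsAtom.le_compl_iff {a b : B} (ha : IsAtom a) : a ≤ bᶜ ↔ ¬ a ≤ b := by
  rw [le_compl_iff_disjoint_right, ha.not_le_iff_disjoint]

theorem IsAtom.isBooleanHom_twoValued_le {a : B} (ha : IsAtom a) :
    IsBooleanHom (twoValued (a ≤ ·) : B → C) :=
  isBooleanHom_twoValued (fun _ _ => le_inf_iff) (fun _ => ha.le_compl_iff)

end TwoValued

section BooleanHom

variable {B C D : Type*} [BooleanAlgebra B] [BooleanAlgebra C] [BooleanAlgebra D]

theorem IsBooleanHom.comp {g : C → D} {h : B → C} (hg : IsBooleanHom g)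
    (hh : IsBooleanHom h) : IsBooleanHom (g ∘ h) := by
  obtain ⟨g₁, g₂, g₃, g₄, g₅⟩ := hg
  obtain ⟨h₁, h₂, h₃, h₄, h₅⟩ := hh
  exact ⟨fun _ _ => by simp [h₁, g₁], fun _ _ => by simp [h₂, g₂], fun _ => by simp [h₃, g₃],
    by simp [h₄, g₄], by simp [h₅, g₅]⟩

theorem IsBooleanHom.monotone {g : B → C} (hg : IsBooleanHom g) : Monotone g := fun a b hab => by
  rw [← inf_eq_left, ← hg.1, inf_eq_left.2 hab]

theorem IsAtom.eq_twoValued_le_of_map_eq_top {a : B} (ha : IsAtom a) {h : B → C}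
    (hh : IsBooleanHom h) (hha : h a = ⊤) : h = twoValued (a ≤ ·) := by
  funext c
  by_cases hc : a ≤ c
  · simpa [twoValued, hc, hha] using hh.monotone hc
  · have : h cᶜ = ⊤ := top_unique (hha ▸ hh.monotone (ha.le_compl_iff.2 hc))
    simpa [twoValued, hc, hh.2.2.1] using this

end BooleanHom

section Free

universe v

def IsFreeBooleanAlgebra {X B : Type*} [BooleanAlgebra B] (ι : X → B) : Prop :=
  ∀ (C : Type v) [BooleanAlgebra C] (f : X → C), ∃! g : B → C, IsBooleanHom g ∧ g ∘ ι = f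

namespace IsFreeBooleanAlgebra

open Filter

variable {X B : Type*} [BooleanAlgebra B] {ι : X → B}

theorem hom_ext (hfree : IsFreeBooleanAlgebra.{v} ι) {C : Type v} [BooleanAlgebra C]
    {g₁ g₂ : B → C} (hg₁ : IsBooleanHom g₁) (hg₂ : IsBooleanHom g₂) (h : g₁ ∘ ι = g₂ ∘ ι) :
    g₁ = g₂ :=
  (hfree C (g₂ ∘ ι)).unique ⟨hg₁, h⟩ ⟨hg₂, rfl⟩

theorem not_isAtom [Infinite X] (hfree : IsFreeBooleanAlgebra.{v} ι) (a : B) : ¬ IsAtom a := by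
  intro ha
  let j : ULift.{v} ℕ ↪ X := Equiv.ulift.toEmbedding.trans (Infinite.natEmbedding X)
  let F : X → Set (ULift.{v} ℕ) := fun x => {n | a ≤ ι x ↔ j n ≠ x}
  obtain ⟨G, ⟨hG, hGι⟩, -⟩ := hfree _ F
  have hGF : ∀ x, G (ι x) = F x := congrFun hGι
  have hFU : ∀ x, F x ∈ hyperfilter (ULift.{v} ℕ) ↔ a ≤ ι x := by
    intro x
    have hfin : {n | j n = x}.Finite :=
      Set.Subsingleton.finite fun _ h₁ _ h₂ => j.injective (h₁.trans h₂.symm)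
    by_cases hx : a ≤ ι x
    · simp only [F, hx, true_iff, iff_true]
      exact compl_mem_hyperfilter_of_finite hfin
    · simp only [F, hx, false_iff, iff_false, not_not]
      exact notMem_hyperfilter_of_finite hfin
  have hlim : twoValued (· ∈ hyperfilter (ULift.{v} ℕ)) ∘ G =
      (twoValued (a ≤ ·) : B → Set (ULift.{v} ℕ)) := by
    refine hfree.hom_ext ((hyperfilter _).isBooleanHom_twoValued_mem.comp hG)
      ha.isBooleanHom_twoValued_le ?_
    funext x
    simp only [Function.comp_apply, hGF]
    exact twoValued_inj.2 (hFU x)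
  obtain ⟨n, hn⟩ : (G a).Nonempty :=
    (hyperfilter _).nonempty_of_mem <| (twoValued_inj.1 (congrFun hlim a)).2 le_rfl
  have hev := ha.eq_twoValued_le_of_map_eq_top
    (((pure n : Ultrafilter _).isBooleanHom_twoValued_mem (C := Bool)).comp hG)
    (by simp [twoValued, hn])
  have hflip := twoValued_inj.1 (congrFun hev (ι (j n)))
  simp only [hGF, Ultrafilter.mem_pure] at hflip
  simp [F] at hflip

end IsFreeBooleanAlgebra

end Free

/-- The free Boolean algebra on an infinite set of generators is atomless. -/
theorem free_booleanAlgebra_on_infinite_atomless {X : Type*} [Infinite X]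
    {B : Type u} [BooleanAlgebra B] (ι : X → B)
    (hfree : ∀ (C : Type v) [BooleanAlgebra C] (f : X → C),
      ∃! g : B → C, IsBooleanHom g ∧ g ∘ ι = f) :
    ∀ b : B, b ≠ ⊥ → ∃ x : B, ⊥ < x ∧ x < b := by
  intro b hb
  by_contra! hb'
  exact IsFreeBooleanAlgebra.not_isAtom hfree b
    ⟨hb, fun x hxb => of_not_not fun hx => hb' x (bot_lt_iff_ne_bot.2 hx) hxb⟩
end
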